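/- arXiv:1007.1997 — 3 statements merged into one kernel-verified Lean document; each statement's English description precedes it below -/
import Mathlib

section
/- Let Φ : ℝ² → ℝ be smooth with Φ(0,0)=0 and ∇Φ(0,0)=0, and let Ω locally be {x₃ > Φ(x₁,x₂)}. Suppose x₀ = (|x₀|,0,0) ∈ Ω, v₀ = (|v₀|,0,0) with |v₀| ≠ 0, t_b(x₀,v₀) = |x₀|/|v₀| so that x_b(x₀,v₀) = (0,0,0), and that Φ(−τ,0) > 0 and Φ(τ,0) < 0 for all sufficiently small τ > 0 (the backward exit point is an inward inflection grazing point). Then t_b is continuous at (x₀,v₀): for every ε > 0 there exists δ > 0 such that |(x,v) − (x₀,v₀)| < δ implies |t_b(x,v) − t_b(x₀,v₀)| < ε. -/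
/-- Backward exit time in ℝ³ modelled as ℝ × ℝ × ℝ. -/
noncomputable def backwardExitTime3 (Ω : Set (ℝ × ℝ × ℝ)) (x v : ℝ × ℝ × ℝ) : ℝ :=
  sSup ({0} ∪ {τ : ℝ | 0 < τ ∧ ∀ s : ℝ, 0 < s → s < τ → x - s • v ∈ Ω})

private lemma sub_smul_triple (a b c d e f s : ℝ) :
    ((a,b,c) : ℝ×ℝ×ℝ) - s • (d,e,f) = (a - s*d, b - s*e, c - s*f) := rfl

/-- Auxiliary function measuring how far a point on the backward ray is from being in Ω. -/
private noncomputable def gAux (Φ : ℝ × ℝ → ℝ) (p : ((ℝ×ℝ×ℝ)×(ℝ×ℝ×ℝ)) × ℝ) : ℝ :=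
  Φ ((p.1.1 - p.2 • p.1.2).1, (p.1.1 - p.2 • p.1.2).2.1) - (p.1.1 - p.2 • p.1.2).2.2

private lemma gAux_cont {Φ : ℝ × ℝ → ℝ} (hΦ : Continuous Φ) : Continuous (gAux Φ) := by
  have h1 : Continuous fun p : ((ℝ×ℝ×ℝ)×(ℝ×ℝ×ℝ)) × ℝ => p.1.1 - p.2 • p.1.2 := by fun_prop
  unfold gAux
  fun_prop

private lemma gAux_mem {Φ : ℝ × ℝ → ℝ} (x v : ℝ×ℝ×ℝ) (s : ℝ) :
    x - s • v ∈ {y : ℝ × ℝ × ℝ | Φ (y.1, y.2.1) < y.2.2} ↔ gAux Φ ((x, v), s) < 0 := by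
  simp [gAux, sub_neg, Set.mem_setOf_eq]

/-- At an inward inflection grazing backward exit point, the backward exit time is
continuous. -/
theorem tb_continuous_at_inward_inflection
    (Φ : ℝ × ℝ → ℝ) (hΦ : ContDiff ℝ (⊤ : ℕ∞) Φ) (hΦ0 : Φ (0, 0) = 0)
    (hΦgrad : fderiv ℝ Φ (0, 0) = 0)
    (Ω : Set (ℝ × ℝ × ℝ)) (hΩ : Ω = {x : ℝ × ℝ × ℝ | Φ (x.1, x.2.1) < x.2.2})
    (a b : ℝ) (hb : 0 < b)
    (x₀ v₀ : ℝ × ℝ × ℝ) (hx₀def : x₀ = (a, 0, 0)) (hv₀def : v₀ = (b, 0, 0))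
    (hx₀ : x₀ ∈ Ω)
    (htb : backwardExitTime3 Ω x₀ v₀ = a / b)
    (hsign : ∃ τ₀ > 0, ∀ τ : ℝ, 0 < τ → τ < τ₀ → 0 < Φ (-τ, 0) ∧ Φ (τ, 0) < 0) :
    ∀ ε > 0, ∃ δ > 0, ∀ x v : ℝ × ℝ × ℝ,
      dist ((x, v) : (ℝ × ℝ × ℝ) × (ℝ × ℝ × ℝ)) (x₀, v₀) < δ →
      |backwardExitTime3 Ω x v - backwardExitTime3 Ω x₀ v₀| < ε := by
  subst hΩ hx₀def hv₀def
  intro ε hε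
  obtain ⟨τ₀, hτ₀, hsign⟩ := hsign
  have hbne : b ≠ 0 := ne_of_gt hb
  have hΦa : Φ (a, 0) < 0 := by simpa using hx₀
  have hΦc : Continuous Φ := hΦ.continuous
  -- a / b is nonnegative
  have hab0 : 0 ≤ a / b := by
    rw [← htb]
    apply Real.sSup_nonneg
    rintro x (rfl | ⟨hx, -⟩)
    · exact le_rfl
    · exact le_of_lt hx
  have ha : 0 < a := by
    rcases lt_trichotomy a 0 with h | h | h
    · exfalso
      have : a / b < 0 := div_neg_of_neg_of_pos h hb
      linarith
    · exfalso
      rw [h] at hΦa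
      rw [hΦ0] at hΦa
      linarith
    · exact h
  have hab : 0 < a / b := div_pos ha hb
  -- the ray is inside Ω strictly before the exit time
  have hIn : ∀ s : ℝ, 0 < s → s < a / b → Φ (a - s * b, 0) < 0 := by
    intro s hs1 hs2
    have hne : ({0} ∪ {τ : ℝ | 0 < τ ∧ ∀ s : ℝ, 0 < s → s < τ →
        ((a,0,0) : ℝ×ℝ×ℝ) - s • ((b,0,0) : ℝ×ℝ×ℝ) ∈
          {y : ℝ × ℝ × ℝ | Φ (y.1, y.2.1) < y.2.2}} : Set ℝ).Nonempty := ⟨0, Or.inl rfl⟩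
    have hlt : s < sSup ({0} ∪ {τ : ℝ | 0 < τ ∧ ∀ s : ℝ, 0 < s → s < τ →
        ((a,0,0) : ℝ×ℝ×ℝ) - s • ((b,0,0) : ℝ×ℝ×ℝ) ∈
          {y : ℝ × ℝ × ℝ | Φ (y.1, y.2.1) < y.2.2}} : Set ℝ) := by
      rw [show sSup _ = a / b from htb]; exact hs2
    obtain ⟨τ', hτ'S, hsτ'⟩ := exists_lt_of_lt_csSup hne hlt
    rcases hτ'S with h0 | ⟨hτ'pos, hP⟩
    · simp only [Set.mem_singleton_iff] at h0; subst h0; linarith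
    · have := hP s hs1 hsτ'
      rw [sub_smul_triple] at this
      simpa using this
  -- choose the scale
  set ε' : ℝ := min ε (τ₀ / b) with hε'def
  have hε' : 0 < ε' := lt_min hε (div_pos hτ₀ hb)
  have hε'ε : ε' ≤ ε := min_le_left _ _
  set sstar : ℝ := a / b + ε' / 2 with hsstardef
  set tstar : ℝ := ε' * b / 2 with htstardef
  have hsstarpos : 0 < sstar := by positivity
  have htstarpos : 0 < tstar := by positivity
  have htstarlt : tstar < τ₀ := by
    have h1 : ε' ≤ τ₀ / b := min_le_right _ _
    have h2 : ε' * b ≤ (τ₀ / b) * b := mul_le_mul_of_nonneg_right h1 (le_of_lt hb)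
    rw [div_mul_cancel₀ _ hbne] at h2
    simp only [htstardef]
    linarith
  have hcoord : ((a,0,0) : ℝ×ℝ×ℝ) - sstar • ((b,0,0) : ℝ×ℝ×ℝ) = (-tstar, 0, 0) := by
    rw [sub_smul_triple]
    have : a - sstar * b = -tstar := by
      simp only [hsstardef, htstardef]
      field_simp
      ring
    rw [this]
    norm_num
  have hΦstar : 0 < Φ (-tstar, 0) := (hsign tstar htstarpos htstarlt).1
  -- the point at time sstar is strictly outside Ω, robustly
  have hU : IsOpen {p : ((ℝ×ℝ×ℝ)×(ℝ×ℝ×ℝ)) × ℝ | 0 < gAux Φ p} :=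
    isOpen_lt continuous_const (gAux_cont hΦc)
  have hmemU : ((((a,0,0),(b,0,0)) : (ℝ×ℝ×ℝ)×(ℝ×ℝ×ℝ)), sstar) ∈
      {p : ((ℝ×ℝ×ℝ)×(ℝ×ℝ×ℝ)) × ℝ | 0 < gAux Φ p} := by
    show 0 < gAux Φ _
    unfold gAux
    simp only [hcoord]
    simpa using hΦstar
  obtain ⟨δ₁, hδ₁pos, hδ₁⟩ := Metric.isOpen_iff.1 hU _ hmemU
  -- tube lemma for the inside part
  set t₁ : ℝ := max (a / b - ε' / 2) 0 with ht₁def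
  have ht₁lt : t₁ < a / b := by
    apply max_lt _ hab
    linarith
  have hKsub : (({(((a,0,0),(b,0,0)) : (ℝ×ℝ×ℝ)×(ℝ×ℝ×ℝ))} : Set _) ×ˢ Set.Icc (0:ℝ) t₁) ⊆
      {p : ((ℝ×ℝ×ℝ)×(ℝ×ℝ×ℝ)) × ℝ | gAux Φ p < 0} := by
    rintro ⟨w, s⟩ ⟨hw, hs0, hs1⟩
    simp only [Set.mem_singleton_iff] at hw
    subst hw
    dsimp only at hs0 hs1 ⊢
    show gAux Φ _ < 0
    unfold gAux
    rw [sub_smul_triple]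
    simp only [mul_zero, sub_zero]
    rcases eq_or_lt_of_le hs0 with h | h
    · rw [← h]; simpa using hΦa
    · have := hIn s h (lt_of_le_of_lt hs1 ht₁lt)
      simpa using this
  have hKcompact : IsCompact (({(((a,0,0),(b,0,0)) : (ℝ×ℝ×ℝ)×(ℝ×ℝ×ℝ))} : Set _) ×ˢ
      Set.Icc (0:ℝ) t₁) := isCompact_singleton.prod isCompact_Icc
  obtain ⟨δ₂, hδ₂pos, hδ₂⟩ := hKcompact.exists_thickening_subset_open
    (isOpen_lt (gAux_cont hΦc) continuous_const) hKsub
  refine ⟨min δ₁ δ₂, lt_min hδ₁pos hδ₂pos, ?_⟩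
  intro x v hdist
  have hd1 : dist ((x, v) : (ℝ×ℝ×ℝ)×(ℝ×ℝ×ℝ)) (((a,0,0)),((b,0,0))) < δ₁ :=
    lt_of_lt_of_le hdist (min_le_left _ _)
  have hd2 : dist ((x, v) : (ℝ×ℝ×ℝ)×(ℝ×ℝ×ℝ)) (((a,0,0)),((b,0,0))) < δ₂ :=
    lt_of_lt_of_le hdist (min_le_right _ _)
  have hdprod : ∀ s : ℝ, dist ((((x, v) : (ℝ×ℝ×ℝ)×(ℝ×ℝ×ℝ)), s))
      ((((a,0,0),(b,0,0)) : (ℝ×ℝ×ℝ)×(ℝ×ℝ×ℝ)), s) =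
      dist ((x, v) : (ℝ×ℝ×ℝ)×(ℝ×ℝ×ℝ)) (((a,0,0)),((b,0,0))) := by
    intro s
    rw [Prod.dist_eq, dist_self]
    exact max_eq_left dist_nonneg
  -- the point at time sstar is outside Ω
  have hout : ¬ (x - sstar • v ∈ {y : ℝ × ℝ × ℝ | Φ (y.1, y.2.1) < y.2.2}) := by
    have hball : (((x, v) : (ℝ×ℝ×ℝ)×(ℝ×ℝ×ℝ)), sstar) ∈
        Metric.ball (((((a,0,0),(b,0,0)) : (ℝ×ℝ×ℝ)×(ℝ×ℝ×ℝ)), sstar)) δ₁ := by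
      rw [Metric.mem_ball, hdprod]
      exact hd1
    have hgt : 0 < gAux Φ (((x, v) : (ℝ×ℝ×ℝ)×(ℝ×ℝ×ℝ)), sstar) := hδ₁ hball
    rw [gAux_mem]
    linarith
  -- points strictly before time t₁ are inside Ω
  have hin : ∀ s : ℝ, 0 ≤ s → s ≤ t₁ →
      x - s • v ∈ {y : ℝ × ℝ × ℝ | Φ (y.1, y.2.1) < y.2.2} := by
    intro s hs0 hs1
    have hthick : (((x, v) : (ℝ×ℝ×ℝ)×(ℝ×ℝ×ℝ)), s) ∈
        Metric.thickening δ₂ (({(((a,0,0),(b,0,0)) : (ℝ×ℝ×ℝ)×(ℝ×ℝ×ℝ))} : Set _) ×ˢ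
          Set.Icc (0:ℝ) t₁) := by
      rw [Metric.mem_thickening_iff]
      exact ⟨((((a,0,0),(b,0,0)) : (ℝ×ℝ×ℝ)×(ℝ×ℝ×ℝ)), s),
        ⟨Set.mem_singleton _, hs0, hs1⟩, by rw [hdprod]; exact hd2⟩
    have := hδ₂ hthick
    rw [gAux_mem]
    exact this
  -- now estimate the exit time for (x, v)
  set S : Set ℝ := {0} ∪ {τ : ℝ | 0 < τ ∧ ∀ s : ℝ, 0 < s → s < τ →
      x - s • v ∈ {y : ℝ × ℝ × ℝ | Φ (y.1, y.2.1) < y.2.2}} with hSdef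
  have hSne : S.Nonempty := ⟨0, Or.inl rfl⟩
  have hub : ∀ τ ∈ S, τ ≤ sstar := by
    rintro τ (h0 | ⟨hτpos, hP⟩)
    · simp only [Set.mem_singleton_iff] at h0; subst h0; exact hsstarpos.le
    · by_contra hcon
      push_neg at hcon
      exact hout (hP sstar hsstarpos hcon)
  have hbdd : BddAbove S := ⟨sstar, hub⟩
  have hupper : backwardExitTime3 {y : ℝ × ℝ × ℝ | Φ (y.1, y.2.1) < y.2.2} x v ≤ sstar :=
    csSup_le hSne hub
  have hge0 : 0 ≤ backwardExitTime3 {y : ℝ × ℝ × ℝ | Φ (y.1, y.2.1) < y.2.2} x v :=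
    le_csSup hbdd (Or.inl rfl)
  have hlower : a / b - ε' / 2 ≤
      backwardExitTime3 {y : ℝ × ℝ × ℝ | Φ (y.1, y.2.1) < y.2.2} x v := by
    rcases le_or_gt (a / b - ε' / 2) 0 with h | h
    · linarith
    · apply le_csSup hbdd
      refine Or.inr ⟨h, fun s hs1 hs2 => hin s hs1.le ?_⟩
      exact le_trans hs2.le (le_max_left _ _)
  rw [htb, abs_lt]
  have h2 : ε' / 2 < ε := by linarith
  have hU2 : backwardExitTime3 {x : ℝ × ℝ × ℝ | Φ (x.1, x.2.1) < x.2.2} x v ≤ a / b + ε' / 2 :=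
    hupper
  have hL2 : a / b - ε' / 2 ≤ backwardExitTime3 {x : ℝ × ℝ × ℝ | Φ (x.1, x.2.1) < x.2.2} x v :=
    hlower
  constructor
  · linarith
  · linarith
end

section
/- Let 0 < γ ≤ 1 and let φ : [0,∞) → [0,∞) be rapidly decreasing (e.g. φ(r) = e^{-r²/8}). Fix v ≠ v' in ℝ³ and let E_{v v'} be the plane through v perpendicular to v' − v. Then the surface integral over w ∈ E_{v v'} of φ(|w|)·|2v − v' − w|^{γ−1}·|(2v − v' − w)·(v' − w)| / |v' − w| is bounded by C_φ (1 + |v − v'|^γ), where C_φ depends only on φ and γ. In particular, writing w = v + η₁e₁ + η₂e₂ in an orthonormal frame of E_{v v'}, the integrand is bounded by φ(η₁² + η₂²)(η₁² + η₂² + |v'−v|²)^{γ/2}, and ∫∫ φ(η₁²+η₂²)(η₁²+η₂²+|v'−v|²)^{γ/2} dη₁ dη₂ ≤ C_φ (1+|v'−v|^γ). -/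
/-! The pointwise bound is `|a - b| ≤ a + b` for `a, b ≥ 0`. For the integral, subadditivity of
`x ↦ x ^ (γ/2)` gives `(s + r²) ^ (γ/2) ≤ (1 + s) (1 + r ^ γ)`, so the integral is at most
`(1 + r ^ γ) ∫ φ(|η|²) (1 + |η|²) dη`, which is finite because
`φ(s) = O((1 + s)⁻³)` and `(1 + |η|)⁻⁴` is integrable on `ℝ²`. -/

open MeasureTheory

lemma Real.rpow_sub_one_mul_abs_sub_le_rpow {a b : ℝ} (ha : 0 ≤ a) (hb : 0 ≤ b) (p : ℝ) :
    (a + b) ^ (p - 1) * |a - b| ≤ (a + b) ^ p := by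
  rcases (add_nonneg ha hb).eq_or_lt with hab | hab
  · have hab' : |a - b| = 0 := by rw [abs_eq_zero]; linarith
    rw [hab', mul_zero]
    exact Real.rpow_nonneg hab.le p
  · have habs : |a - b| ≤ a + b := abs_le.2 ⟨by linarith, by linarith⟩
    calc (a + b) ^ (p - 1) * |a - b| ≤ (a + b) ^ (p - 1) * (a + b) := by gcongr
      _ = (a + b) ^ p := by rw [Real.rpow_sub_one hab.ne', div_mul_cancel₀ _ hab.ne']

lemma Real.rpow_le_one_add {a p : ℝ} (ha : 0 ≤ a) (hp : 0 ≤ p) (hp1 : p ≤ 1) :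
    a ^ p ≤ 1 + a := by
  rcases le_total a 1 with h | h
  · linarith [Real.rpow_le_one ha h hp]
  · linarith [Real.rpow_le_self_of_one_le h hp1]

lemma Real.rpow_add_le_one_add_mul_one_add_rpow {a b p : ℝ} (ha : 0 ≤ a) (hb : 0 ≤ b)
    (hp : 0 ≤ p) (hp1 : p ≤ 1) : (a + b) ^ p ≤ (1 + a) * (1 + b ^ p) := by
  have hbp : 0 ≤ b ^ p := Real.rpow_nonneg hb p
  calc (a + b) ^ p ≤ a ^ p + b ^ p := Real.rpow_add_le_add_rpow ha hb hp hp1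
    _ ≤ 1 + a + b ^ p := by linarith [Real.rpow_le_one_add ha hp hp1]
    _ ≤ (1 + a) * (1 + b ^ p) := by nlinarith

lemma Prod.sq_norm_le_sq_add_sq (η : ℝ × ℝ) : ‖η‖ ^ 2 ≤ η.1 ^ 2 + η.2 ^ 2 := by
  rw [Prod.norm_def, Real.norm_eq_abs, Real.norm_eq_abs]
  rcases max_choice |η.1| |η.2| with h | h <;> rw [h, sq_abs] <;>
    linarith [sq_nonneg η.1, sq_nonneg η.2]

lemma Prod.one_add_norm_pow_four_le (η : ℝ × ℝ) :
    (1 + ‖η‖) ^ 4 ≤ 4 * (1 + (η.1 ^ 2 + η.2 ^ 2)) ^ 2 := by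
  have h : (1 + ‖η‖) ^ 2 ≤ 2 * (1 + (η.1 ^ 2 + η.2 ^ 2)) := by
    nlinarith [sq_nonneg (1 - ‖η‖), Prod.sq_norm_le_sq_add_sq η]
  calc (1 + ‖η‖) ^ 4 = ((1 + ‖η‖) ^ 2) ^ 2 := by ring
    _ ≤ (2 * (1 + (η.1 ^ 2 + η.2 ^ 2))) ^ 2 := by gcongr
    _ = 4 * (1 + (η.1 ^ 2 + η.2 ^ 2)) ^ 2 := by ring

lemma integrable_comp_sq_add_sq {ψ : ℝ → ℝ} (hψ : Continuous ψ) {C : ℝ}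
    (hC : ∀ s, 0 ≤ s → |ψ s| * (1 + s) ^ 2 ≤ C) :
    Integrable fun η : ℝ × ℝ ↦ ψ (η.1 ^ 2 + η.2 ^ 2) := by
  have hdom : Integrable fun η : ℝ × ℝ ↦ (1 + ‖η‖) ^ (-(4 : ℝ)) :=
    integrable_one_add_norm (by norm_num)
  refine (hdom.const_mul (4 * C)).mono' (hψ.comp (by fun_prop)).aestronglyMeasurable
    (.of_forall fun η ↦ ?_)
  have hpos : 0 < 1 + ‖η‖ := by positivity
  rw [Real.rpow_neg hpos.le, Real.rpow_ofNat, ← div_eq_mul_inv, le_div_iff₀ (by positivity),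
    Real.norm_eq_abs]
  calc |ψ (η.1 ^ 2 + η.2 ^ 2)| * (1 + ‖η‖) ^ 4
      ≤ |ψ (η.1 ^ 2 + η.2 ^ 2)| * (4 * (1 + (η.1 ^ 2 + η.2 ^ 2)) ^ 2) := by
        gcongr; exact Prod.one_add_norm_pow_four_le η
    _ ≤ 4 * C := by linarith [hC _ (by positivity : (0 : ℝ) ≤ η.1 ^ 2 + η.2 ^ 2)]

lemma integral_comp_sq_add_sq_mul_rpow_le {φ : ℝ → ℝ} {γ r : ℝ} (hγ0 : 0 ≤ γ) (hγ2 : γ ≤ 2)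
    (hr : 0 ≤ r) (hφ0 : ∀ s, 0 ≤ φ s)
    (hφ : Integrable fun η : ℝ × ℝ ↦ φ (η.1 ^ 2 + η.2 ^ 2) * (1 + (η.1 ^ 2 + η.2 ^ 2))) :
    ∫ η : ℝ × ℝ, φ (η.1 ^ 2 + η.2 ^ 2) * (η.1 ^ 2 + η.2 ^ 2 + r ^ 2) ^ (γ / 2) ≤
      (1 + r ^ γ) * ∫ η : ℝ × ℝ, φ (η.1 ^ 2 + η.2 ^ 2) * (1 + (η.1 ^ 2 + η.2 ^ 2)) := by
  have hrγ : (r ^ 2) ^ (γ / 2) = r ^ γ := by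
    rw [← Real.rpow_natCast, ← Real.rpow_mul hr]; ring_nf
  rw [← integral_const_mul]
  refine integral_mono_of_nonneg (.of_forall fun η ↦ ?_) (hφ.const_mul _) (.of_forall fun η ↦ ?_)
  · exact mul_nonneg (hφ0 _) (Real.rpow_nonneg (by positivity) _)
  · have h := Real.rpow_add_le_one_add_mul_one_add_rpow
      (by positivity : 0 ≤ η.1 ^ 2 + η.2 ^ 2) (sq_nonneg r) (by positivity : 0 ≤ γ / 2)
      (by linarith)
    rw [hrγ] at h
    calc _ ≤ φ (η.1 ^ 2 + η.2 ^ 2) * ((1 + (η.1 ^ 2 + η.2 ^ 2)) * (1 + r ^ γ)) :=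
          mul_le_mul_of_nonneg_left h (hφ0 _)
      _ = _ := by ring

/-- Lemma `estimwhb`: for a rapidly decreasing φ, the integral over the hyperplane
E_{v v'} (parametrized by orthonormal coordinates η = (η₁,η₂), with r = |v − v'|) of
the collision kernel is bounded by C_φ (1 + r^γ).  Pointwise, the integrand is bounded
by φ(η₁²+η₂²)(η₁²+η₂²+r²)^{γ/2}, and the double integral of this bound is at most
C_φ (1 + r^γ). -/
theorem hyperplane_kernel_integral_bound
    (γ : ℝ) (hγ0 : 0 < γ) (hγ1 : γ ≤ 1)
    (φ : ℝ → ℝ) (hφ0 : ∀ r, 0 ≤ φ r) (hφc : Continuous φ)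
    (hφdec : ∀ n : ℕ, ∃ C : ℝ, ∀ r : ℝ, 0 ≤ r → φ r * (1 + r) ^ n ≤ C) :
    (∀ η₁ η₂ r : ℝ, 0 ≤ r →
      φ (η₁ ^ 2 + η₂ ^ 2) * (η₁ ^ 2 + η₂ ^ 2 + r ^ 2) ^ (γ / 2 - 1) *
          |η₁ ^ 2 + η₂ ^ 2 - r ^ 2| ≤
        φ (η₁ ^ 2 + η₂ ^ 2) * (η₁ ^ 2 + η₂ ^ 2 + r ^ 2) ^ (γ / 2)) ∧
    ∃ C > 0, ∀ r : ℝ, 0 ≤ r →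
      (∫ η : ℝ × ℝ,
          φ (η.1 ^ 2 + η.2 ^ 2) * (η.1 ^ 2 + η.2 ^ 2 + r ^ 2) ^ (γ / 2)) ≤
        C * (1 + r ^ γ) := by
  refine ⟨fun η₁ η₂ r _ ↦ ?_, ?_⟩
  · rw [mul_assoc]
    exact mul_le_mul_of_nonneg_left
      (Real.rpow_sub_one_mul_abs_sub_le_rpow (by positivity) (sq_nonneg r) _) (hφ0 _)
  obtain ⟨C₃, hC₃⟩ := hφdec 3
  have hφ : Integrable fun η : ℝ × ℝ ↦ φ (η.1 ^ 2 + η.2 ^ 2) * (1 + (η.1 ^ 2 + η.2 ^ 2)) := by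
    refine integrable_comp_sq_add_sq (ψ := fun s ↦ φ s * (1 + s)) (C := C₃) (by fun_prop)
      fun s hs ↦ ?_
    rw [abs_of_nonneg (mul_nonneg (hφ0 s) (by linarith))]
    linarith [hC₃ s hs]
  set I := ∫ η : ℝ × ℝ, φ (η.1 ^ 2 + η.2 ^ 2) * (1 + (η.1 ^ 2 + η.2 ^ 2))
  have hI : 0 ≤ I := integral_nonneg fun η ↦ mul_nonneg (hφ0 _) (by positivity)
  refine ⟨I + 1, by linarith, fun r hr ↦ ?_⟩
  calc _ ≤ (1 + r ^ γ) * I := integral_comp_sq_add_sq_mul_rpow_le hγ0.le (by linarith) hr hφ0 hφ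
    _ ≤ (I + 1) * (1 + r ^ γ) := by nlinarith [Real.rpow_nonneg hr γ]
end

section
/- Let Ω ⊂ ℝ³ be open with x₀ ∈ ∂Ω, v₀ ∈ ℝ³ \ {0}, and suppose t_b(x₀, v₀) > t₀ > 0, i.e. the open segment {x₀ − s v₀ : 0 < s < t₀} is contained in Ω and the closed segment meets ∂Ω only at x₀. Then for every sufficiently small ε > 0 there exist ϱ > 0 and N ∈ ℕ such that the tube ⋃_{s∈[0,t₀]} B(x₀ − s v₀; ϱ) meets ∂Ω only inside B(x₀; ε), and for every (x,v) ∈ B((x₀,v₀); 1/N): if x_b(x,v) ∉ B(x₀; ε) then t_b(x,v) > t₀. -/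
/-! The point x₀ − t v₀ lies in Ω for 0 < t ≤ t₀ (the endpoint t₀ because it is in the closure
of Ω but not on its frontier). Away from x₀, i.e. for t in a compact interval [δ, t₀], the
segment therefore has a whole ϱ-neighbourhood inside Ω, so the ϱ-tube around the segment can
meet ∂Ω only near x₀. A trajectory from (x, v) close to (x₀, v₀) stays in that tube up to time
t₀; if it left Ω before t₀, its exit position would be a point of ∂Ω in the tube, hence
close to x₀. -/

/-- Backward exit time. -/
noncomputable def backwardExitTime (Ω : Set (EuclideanSpace ℝ (Fin 3)))
    (x v : EuclideanSpace ℝ (Fin 3)) : ℝ :=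
  sSup ({0} ∪ {τ : ℝ | 0 < τ ∧ ∀ s : ℝ, 0 < s → s < τ → x - s • v ∈ Ω})

/-- Backward exit position. -/
noncomputable def backwardExitPos (Ω : Set (EuclideanSpace ℝ (Fin 3)))
    (x v : EuclideanSpace ℝ (Fin 3)) : EuclideanSpace ℝ (Fin 3) :=
  x - backwardExitTime Ω x v • v

open Set Metric

theorem dist_sub_smul_sub_smul_le {E : Type*} [SeminormedAddCommGroup E] [NormedSpace ℝ E]
    (x x₀ v v₀ : E) {s : ℝ} (hs : 0 ≤ s) :
    dist (x - s • v) (x₀ - s • v₀) ≤ dist x x₀ + s * dist v v₀ := by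
  calc dist (x - s • v) (x₀ - s • v₀) ≤ dist x x₀ + dist (s • v) (s • v₀) :=
        dist_sub_sub_le _ _ _ _
    _ = dist x x₀ + s * dist v v₀ := by rw [dist_smul₀, Real.norm_of_nonneg hs]

theorem exists_tube_inter_frontier_subset_ball {X : Type*} [PseudoMetricSpace X] {Ω : Set X}
    (hΩ : IsOpen Ω) {f : ℝ → X} (hf : Continuous f) {t₀ ε : ℝ} (hε : 0 < ε)
    (hfΩ : ∀ s, 0 < s → s ≤ t₀ → f s ∈ Ω) :
    ∃ ϱ > 0, (⋃ s ∈ Icc (0 : ℝ) t₀, ball (f s) ϱ) ∩ frontier Ω ⊆ ball (f 0) ε := by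
  obtain ⟨δ, hδ, hnear⟩ := Metric.continuous_iff.mp hf 0 (ε / 2) (half_pos hε)
  have hcore : f '' Icc δ t₀ ⊆ Ω := by
    rintro _ ⟨s, ⟨hδs, hst⟩, rfl⟩
    exact hfΩ s (hδ.trans_le hδs) hst
  obtain ⟨ϱ₀, hϱ₀, hthick⟩ :=
    (isCompact_Icc.image hf).exists_thickening_subset_open hΩ hcore
  refine ⟨min (ε / 2) ϱ₀, lt_min (half_pos hε) hϱ₀, ?_⟩
  rintro y ⟨hy, hyfr⟩
  simp only [mem_iUnion] at hy
  obtain ⟨s, ⟨hs0, hst⟩, hys⟩ := hy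
  rw [mem_ball] at hys ⊢
  rcases lt_or_ge s δ with hsδ | hδs
  · have hfs : dist (f s) (f 0) < ε / 2 :=
      hnear s (by rwa [Real.dist_eq, sub_zero, abs_of_nonneg hs0])
    calc dist y (f 0) ≤ dist y (f s) + dist (f s) (f 0) := dist_triangle _ _ _
      _ < ε / 2 + ε / 2 := add_lt_add (hys.trans_le (min_le_left _ _)) hfs
      _ = ε := add_halves ε
  · have hyΩ : y ∈ Ω := hthick <| mem_thickening_iff.mpr
      ⟨f s, mem_image_of_mem f ⟨hδs, hst⟩, hys.trans_le (min_le_right _ _)⟩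
    exact absurd (mem_inter hyΩ hyfr) (hΩ.inter_frontier_eq ▸ notMem_empty y)

theorem sub_smul_mem_of_pos_of_le {Ω : Set (EuclideanSpace ℝ (Fin 3))} (hΩ : IsOpen Ω)
    {x₀ v₀ : EuclideanSpace ℝ (Fin 3)} {t₀ : ℝ}
    (hseg : ∀ s : ℝ, 0 < s → s < t₀ → x₀ - s • v₀ ∈ Ω)
    (hfr : ∀ s : ℝ, 0 ≤ s → s ≤ t₀ → x₀ - s • v₀ ∈ frontier Ω → s = 0)
    {s : ℝ} (hs : 0 < s) (hst : s ≤ t₀) : x₀ - s • v₀ ∈ Ω := by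
  rcases hst.lt_or_eq with hst | rfl
  · exact hseg s hs hst
  have hcl : x₀ - s • v₀ ∈ closure Ω := by
    refine ContinuousWithinAt.mem_closure (s := Ioo 0 s) (by fun_prop) ?_
      fun t ht => hseg t ht.1 ht.2
    rw [closure_Ioo hs.ne]
    exact right_mem_Icc.mpr hs.le
  by_contra hnot
  exact hs.ne' (hfr s hs.le le_rfl (hΩ.frontier_eq ▸ ⟨hcl, hnot⟩))

section BackwardExit

variable {Ω : Set (EuclideanSpace ℝ (Fin 3))} {x v : EuclideanSpace ℝ (Fin 3)}

theorem backwardExitTime_nonneg : 0 ≤ backwardExitTime Ω x v := by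
  refine Real.sSup_nonneg fun τ hτ => ?_
  rcases hτ with rfl | ⟨hτ, -⟩
  exacts [le_rfl, hτ.le]

theorem backwardExitPos_of_backwardExitTime_eq_zero (h : backwardExitTime Ω x v = 0) :
    backwardExitPos Ω x v = x := by
  rw [backwardExitPos, h, zero_smul, sub_zero]

theorem sub_smul_mem_of_lt_backwardExitTime {s : ℝ} (hs : 0 < s)
    (hsT : s < backwardExitTime Ω x v) : x - s • v ∈ Ω := by
  rw [backwardExitTime] at hsT
  obtain ⟨τ, hτ, hsτ⟩ := exists_lt_of_lt_csSup
    ((singleton_nonempty 0).mono subset_union_left) hsT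
  rcases hτ with rfl | ⟨-, hτΩ⟩
  exacts [absurd hs hsτ.not_gt, hτΩ s hs hsτ]

theorem backwardExitPos_notMem (hΩ : IsOpen Ω) (hT : 0 < backwardExitTime Ω x v) :
    backwardExitPos Ω x v ∉ Ω := by
  set T := backwardExitTime Ω x v
  -- `sSup` of a set that is not bounded above is `0`
  have hbdd : BddAbove ({0} ∪ {τ : ℝ | 0 < τ ∧ ∀ s : ℝ, 0 < s → s < τ → x - s • v ∈ Ω}) := by
    by_contra hb
    exact hT.ne' (Real.sSup_of_not_bddAbove hb)
  intro hmem
  have hopen : IsOpen ((fun s : ℝ => x - s • v) ⁻¹' Ω) := hΩ.preimage (by fun_prop)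
  obtain ⟨η, hη, hball⟩ := Metric.isOpen_iff.mp hopen T hmem
  have hbeyond : T + η / 2 ≤ T := by
    refine le_csSup hbdd (Or.inr ⟨by positivity, fun s hs hsη => ?_⟩)
    rcases lt_or_ge s T with hsT | hTs
    · exact sub_smul_mem_of_lt_backwardExitTime hs hsT
    · exact hball (by rw [mem_ball, Real.dist_eq, abs_of_nonneg (by linarith)]; linarith)
  linarith

theorem backwardExitPos_mem_frontier (hΩ : IsOpen Ω) (hT : 0 < backwardExitTime Ω x v) :
    backwardExitPos Ω x v ∈ frontier Ω := by
  refine hΩ.frontier_eq ▸ ⟨?_, backwardExitPos_notMem hΩ hT⟩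
  refine ContinuousWithinAt.mem_closure (f := fun s : ℝ => x - s • v)
    (s := Ioo 0 (backwardExitTime Ω x v)) (by fun_prop) ?_
    fun s hs => sub_smul_mem_of_lt_backwardExitTime hs.1 hs.2
  rw [closure_Ioo hT.ne]
  exact right_mem_Icc.mpr hT.le

end BackwardExit

theorem nearby_trajectories_survive_general
    (Ω : Set (EuclideanSpace ℝ (Fin 3))) (hΩ : IsOpen Ω)
    (x₀ v₀ : EuclideanSpace ℝ (Fin 3))
    (t₀ : ℝ)
    (hseg : ∀ s : ℝ, 0 < s → s < t₀ → x₀ - s • v₀ ∈ Ω)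
    (hfr : ∀ s : ℝ, 0 ≤ s → s ≤ t₀ → x₀ - s • v₀ ∈ frontier Ω → s = 0) :
    ∃ ε₀ > 0, ∀ ε : ℝ, 0 < ε → ε ≤ ε₀ →
      ∃ ϱ > 0, ∃ N : ℕ, 0 < N ∧
        ((⋃ s ∈ Set.Icc (0 : ℝ) t₀, Metric.ball (x₀ - s • v₀) ϱ) ∩ frontier Ω ⊆
          Metric.ball x₀ ε) ∧
        ∀ x v : EuclideanSpace ℝ (Fin 3),
          dist x x₀ < 1 / N → dist v v₀ < 1 / N →
          backwardExitPos Ω x v ∉ Metric.ball x₀ ε →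
          t₀ < backwardExitTime Ω x v := by
  refine ⟨1, one_pos, fun ε hε _ => ?_⟩
  obtain ⟨ϱ, hϱ, htube⟩ := exists_tube_inter_frontier_subset_ball hΩ
    (f := fun s : ℝ => x₀ - s • v₀) (by fun_prop) hε
    fun s hs hst => sub_smul_mem_of_pos_of_le hΩ hseg hfr hs hst
  simp only [zero_smul, sub_zero] at htube
  have hη : 0 < min ε ϱ / (1 + |t₀|) := by positivity
  obtain ⟨n, hn⟩ := exists_nat_one_div_lt hη
  refine ⟨ϱ, hϱ, n + 1, n.succ_pos, htube, fun x v hx hv hexit => ?_⟩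
  push_cast at hx hv ⊢
  have hN : 1 / ((n : ℝ) + 1) * (1 + |t₀|) < min ε ϱ := by
    rwa [lt_div_iff₀ (by positivity)] at hn
  by_contra! hT
  rcases backwardExitTime_nonneg.eq_or_lt with hT0 | hTpos
  · refine hexit ?_
    rw [backwardExitPos_of_backwardExitTime_eq_zero hT0.symm, mem_ball]
    nlinarith [abs_nonneg t₀, min_le_left ε ϱ]
  · refine hexit (htube ⟨mem_iUnion₂.mpr ⟨_, ⟨hTpos.le, hT⟩, ?_⟩,
      backwardExitPos_mem_frontier hΩ hTpos⟩)
    rw [mem_ball]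
    refine (dist_sub_smul_sub_smul_le x x₀ v v₀ hTpos.le).trans_lt ?_
    nlinarith [le_abs_self t₀, min_le_right ε ϱ, dist_nonneg (x := v) (y := v₀)]

/-- Statement (canreachthere): if the backward trajectory from (x₀,v₀) stays inside Ω
for time t₀ except at x₀ itself, then for ε small there are ϱ > 0 and N ∈ ℕ such that
the tube of radius ϱ around the segment meets ∂Ω only inside B(x₀,ε), and any
(x,v) ∈ B((x₀,v₀);1/N) whose backward exit position avoids B(x₀,ε) has
backward exit time greater than t₀. -/
theorem nearby_trajectories_survive
    (Ω : Set (EuclideanSpace ℝ (Fin 3))) (hΩ : IsOpen Ω)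
    (x₀ v₀ : EuclideanSpace ℝ (Fin 3)) (hx₀ : x₀ ∈ frontier Ω) (hv₀ : v₀ ≠ 0)
    (t₀ : ℝ) (ht₀ : 0 < t₀)
    (hseg : ∀ s : ℝ, 0 < s → s < t₀ → x₀ - s • v₀ ∈ Ω)
    (hfr : ∀ s : ℝ, 0 ≤ s → s ≤ t₀ → x₀ - s • v₀ ∈ frontier Ω → s = 0) :
    ∃ ε₀ > 0, ∀ ε : ℝ, 0 < ε → ε ≤ ε₀ →
      ∃ ϱ > 0, ∃ N : ℕ, 0 < N ∧
        ((⋃ s ∈ Set.Icc (0 : ℝ) t₀, Metric.ball (x₀ - s • v₀) ϱ) ∩ frontier Ω ⊆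
          Metric.ball x₀ ε) ∧
        ∀ x v : EuclideanSpace ℝ (Fin 3),
          dist x x₀ < 1 / N → dist v v₀ < 1 / N →
          backwardExitPos Ω x v ∉ Metric.ball x₀ ε →
          t₀ < backwardExitTime Ω x v :=
  nearby_trajectories_survive_general Ω hΩ x₀ v₀ t₀ hseg hfr
end
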